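/- For every n ≥ 2, the identity map id : Y_n → Y_n is pure in the cone CP(Y_n, Y_n) of completely positive linear maps: whenever ϑ, ω : Y_n → Y_n are completely positive linear maps with ϑ + ω = id, there exists s ∈ [0,1] such that ϑ = s·id and ω = (1−s)·id. (This is the content of the theorem that the identity map on the noncommutative-cube operator system NC(n) is pure, transported through the complete order isomorphism NC(n)^d ≅ Y_n.) -/

import Mathlib

/-!
Every element `yMat n α β` of `Yₙ` is diagonal in the fixed basis `u_{k,±} = e_{(k,0)} ± e_{(k,1)}`,
with eigenvalues `α ± βₖ`; so it is positive semidefinite iff all `α ± βₖ ≥ 0`. If `ϑ + ω = id`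
with `ϑ, ω` positive, then `0 ≤ ϑ x ≤ x`, so `ϑ x` kills every vector killed by a positive `x`.
For `j ≠ k` and signs `σ, τ`, the positive element `yMat n 1 (τ eₖ - σ eⱼ)` kills `u_{j,σ}`; reading
this off for the four choices of signs forces `ϑ` to fix every basis element of `Yₙ` up to one common
scalar `a`. Positivity of `ϑ 1 = a • 1` and `ω 1 = (1 - a) • 1` then gives `0 ≤ a ≤ 1`.
-/

open scoped ComplexOrder

/-- The `(m·|ι|) × (m·|ι|)` matrix obtained from an `m × m` array of `ι × ι` matrices. -/
def blockMat {ι : Type} {m : ℕ} (x : Fin m → Fin m → Matrix ι ι ℂ) :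
    Matrix (Fin m × ι) (Fin m × ι) ℂ :=
  Matrix.of fun p q => x p.1 q.1 p.2 q.2

/-- Complete positivity for a linear map between matrix operator systems
(given as subspaces of matrix algebras): every positive semidefinite `m × m` block
matrix with entries in `S` is sent (entrywise) to a positive semidefinite block matrix. -/
def IsCP {ι κ : Type} [Fintype ι] [Fintype κ]
    (S : Submodule ℂ (Matrix ι ι ℂ)) (T : Submodule ℂ (Matrix κ κ ℂ))
    (φ : S →ₗ[ℂ] T) : Prop :=
  ∀ (m : ℕ) (x : Fin m → Fin m → S),
    (blockMat fun i j => (x i j : Matrix ι ι ℂ)).PosSemidef →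
    (blockMat fun i j => (φ (x i j) : Matrix κ κ ℂ)).PosSemidef

/-- The block-diagonal matrix `⊕ₖ [[α, βₖ],[βₖ, α]]` in `M_{2n}(ℂ)`. -/
def yMat (n : ℕ) (α : ℂ) (β : Fin n → ℂ) :
    Matrix (Fin n × Fin 2) (Fin n × Fin 2) ℂ :=
  Matrix.of fun p q => if p.1 = q.1 then !![α, β p.1; β p.1, α] p.2 q.2 else 0

/-- The matrix operator system `Yₙ = { ⊕ₖ [[α, βₖ],[βₖ, α]] } ⊆ M_{2n}(ℂ)`,
completely order isomorphic to the dual of the operator system `NC(n)` of the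
noncommutative `n`-cube. -/
noncomputable def YSys (n : ℕ) : Submodule ℂ (Matrix (Fin n × Fin 2) (Fin n × Fin 2) ℂ) :=
  Submodule.span ℂ {x | ∃ α β, x = yMat n α β}

open Matrix

lemma yMat_apply (n : ℕ) (α : ℂ) (β : Fin n → ℂ) (p q : Fin n × Fin 2) :
    yMat n α β p q = if p.1 = q.1 then (if p.2 = q.2 then α else β p.1) else 0 := by
  rcases p with ⟨i, s⟩
  rcases q with ⟨i', s'⟩
  fin_cases s <;> fin_cases s' <;> simp [yMat]

def yVec (n : ℕ) (j : Fin n) (σ : ℂ) : Fin n × Fin 2 → ℂ :=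
  Pi.single (j, 0) 1 + Pi.single (j, 1) σ

lemma yVec_ne_zero {n : ℕ} (j : Fin n) (σ : ℂ) : yVec n j σ ≠ 0 :=
  fun h => by simpa [yVec] using congrFun h (j, 0)

lemma star_yVec_dotProduct_yVec {n : ℕ} (j : Fin n) {σ : ℂ} (hσ : σ = 1 ∨ σ = -1) :
    star (yVec n j σ) ⬝ᵥ yVec n j σ = 2 := by
  rcases hσ with rfl | rfl <;> simp [yVec, dotProduct_add] <;> norm_num

lemma yMat_mulVec_yVec {n : ℕ} (α : ℂ) (β : Fin n → ℂ) (j : Fin n) {σ : ℂ} (hσ : σ * σ = 1) :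
    yMat n α β *ᵥ yVec n j σ = (α + σ * β j) • yVec n j σ := by
  ext ⟨i, s⟩
  by_cases h : i = j
  · subst h
    fin_cases s <;> simp [yVec, mulVec_add, mulVec_single, yMat_apply]
    linear_combination -(β i) * hσ
  · simp [yVec, mulVec_add, mulVec_single, yMat_apply, h]

lemma yMat_eq_sum_vecMulVec (n : ℕ) (α : ℂ) (β : Fin n → ℂ) :
    yMat n α β = ∑ k, (((α + β k) / 2) • vecMulVec (yVec n k 1) (star (yVec n k 1)) +
      ((α - β k) / 2) • vecMulVec (yVec n k (-1)) (star (yVec n k (-1)))) := by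
  ext ⟨i, s⟩ ⟨i', s'⟩
  rw [Matrix.sum_apply, Finset.sum_eq_single i
    (fun k _ hk => by simp [vecMulVec_apply, yVec, Ne.symm hk]) (by simp)]
  by_cases h : i = i'
  · subst h
    fin_cases s <;> fin_cases s' <;> simp [yMat_apply, vecMulVec_apply, yVec] <;> ring
  · simp [yMat_apply, vecMulVec_apply, yVec, h, Ne.symm h]

lemma yMat_posSemidef_iff {n : ℕ} {α : ℂ} {β : Fin n → ℂ} :
    (yMat n α β).PosSemidef ↔ ∀ k, 0 ≤ α + β k ∧ 0 ≤ α - β k := by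
  constructor
  · intro hM
    have eigenvalue_nonneg (k : Fin n) (σ : ℂ) (hσ : σ = 1 ∨ σ = -1) : 0 ≤ α + σ * β k := by
      have h := hM.dotProduct_mulVec_nonneg (yVec n k σ)
      rw [yMat_mulVec_yVec α β k (by rcases hσ with rfl | rfl <;> norm_num), dotProduct_smul,
        star_yVec_dotProduct_yVec k hσ, smul_eq_mul] at h
      simpa using mul_nonneg h (by positivity : (0 : ℂ) ≤ 2⁻¹)
    exact fun k => ⟨by simpa using eigenvalue_nonneg k 1 (.inl rfl),
      by simpa [sub_eq_add_neg] using eigenvalue_nonneg k (-1) (.inr rfl)⟩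
  · intro h
    rw [yMat_eq_sum_vecMulVec]
    refine posSemidef_sum _ fun k _ => ((posSemidef_vecMulVec_self_star _).smul ?_).add
      ((posSemidef_vecMulVec_self_star _).smul ?_)
    · have := (h k).1
      positivity
    · have := (h k).2
      positivity

lemma yMat_one_single_sub_single_posSemidef {n : ℕ} {j k : Fin n} (hjk : j ≠ k) {σ τ : ℂ}
    (hσ : σ = 1 ∨ σ = -1) (hτ : τ = 1 ∨ τ = -1) :
    (yMat n 1 (Pi.single k τ - Pi.single j σ)).PosSemidef := by
  refine yMat_posSemidef_iff.mpr fun i => ?_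
  by_cases hij : i = j
  · subst hij
    rcases hσ with rfl | rfl <;> simp [hjk] <;> norm_num
  · by_cases hik : i = k
    · subst hik
      rcases hτ with rfl | rfl <;> simp [hij] <;> norm_num
    · simp [hij, hik]

lemma yMat_one_single_sub_single_mulVec_yVec {n : ℕ} {j k : Fin n} (hjk : j ≠ k) {σ : ℂ}
    (hσ : σ * σ = 1) (τ : ℂ) : yMat n 1 (Pi.single k τ - Pi.single j σ) *ᵥ yVec n j σ = 0 := by
  rw [yMat_mulVec_yVec _ _ _ hσ]
  simp [hjk, hσ]

def yMatLinear (n : ℕ) : (ℂ × (Fin n → ℂ)) →ₗ[ℂ] Matrix (Fin n × Fin 2) (Fin n × Fin 2) ℂ where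
  toFun p := yMat n p.1 p.2
  map_add' p q := by
    ext i j
    simp only [Prod.fst_add, Prod.snd_add, Matrix.add_apply, yMat_apply, Pi.add_apply]
    split_ifs <;> simp
  map_smul' c p := by
    ext i j
    simp only [Prod.smul_fst, Prod.smul_snd, Matrix.smul_apply, yMat_apply, Pi.smul_apply]
    split_ifs <;> simp

lemma YSys_eq_range (n : ℕ) : YSys n = LinearMap.range (yMatLinear n) := by
  rw [YSys, ← Submodule.span_eq (LinearMap.range (yMatLinear n)), LinearMap.coe_range]
  congr 1
  ext x
  simp [yMatLinear, eq_comm]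

noncomputable def toYSys (n : ℕ) : (ℂ × (Fin n → ℂ)) →ₗ[ℂ] YSys n :=
  (yMatLinear n).codRestrict _ fun p => YSys_eq_range n ▸ LinearMap.mem_range_self _ p

lemma coe_toYSys (n : ℕ) (p : ℂ × (Fin n → ℂ)) :
    (toYSys n p : Matrix (Fin n × Fin 2) (Fin n × Fin 2) ℂ) = yMat n p.1 p.2 :=
  rfl

lemma toYSys_surjective (n : ℕ) : Function.Surjective (toYSys n) := by
  rintro ⟨x, hx⟩
  rw [YSys_eq_range] at hx
  obtain ⟨p, rfl⟩ := hx
  exact ⟨p, rfl⟩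

lemma IsCP.posSemidef_apply {ι κ : Type} [Fintype ι] [Fintype κ]
    {S : Submodule ℂ (Matrix ι ι ℂ)} {T : Submodule ℂ (Matrix κ κ ℂ)}
    {φ : S →ₗ[ℂ] T} (h : IsCP S T φ) {x : S} (hx : (x : Matrix ι ι ℂ).PosSemidef) :
    (φ x : Matrix κ κ ℂ).PosSemidef :=
  (h 1 (fun _ _ => x) (hx.submatrix Prod.snd)).submatrix fun i => ((0 : Fin 1), i)

lemma Matrix.PosSemidef.mulVec_eq_zero_of_add {𝕜 ι : Type*} [RCLike 𝕜] [Fintype ι]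
    {A B : Matrix ι ι 𝕜} (hA : A.PosSemidef) (hB : B.PosSemidef) {v : ι → 𝕜}
    (hv : (A + B) *ᵥ v = 0) : A *ᵥ v = 0 := by
  rw [← hA.dotProduct_mulVec_zero_iff]
  have hsum : star v ⬝ᵥ A *ᵥ v + star v ⬝ᵥ B *ᵥ v = 0 := by
    rw [← dotProduct_add, ← add_mulVec, hv, dotProduct_zero]
  exact ((add_eq_zero_iff_of_nonneg (hA.dotProduct_mulVec_nonneg v)
    (hB.dotProduct_mulVec_nonneg v)).mp hsum).1

def KerPreserving {ι : Type} [Fintype ι] {S : Submodule ℂ (Matrix ι ι ℂ)} (ϑ : S →ₗ[ℂ] S) :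
    Prop :=
  ∀ (x : S) (v : ι → ℂ), (x : Matrix ι ι ℂ).PosSemidef → (x : Matrix ι ι ℂ) *ᵥ v = 0 →
    (ϑ x : Matrix ι ι ℂ) *ᵥ v = 0

lemma kerPreserving_of_isCP_of_add_eq_id {ι : Type} [Fintype ι] {S : Submodule ℂ (Matrix ι ι ℂ)}
    {ϑ ω : S →ₗ[ℂ] S} (hϑ : IsCP S S ϑ) (hω : IsCP S S ω) (hsum : ϑ + ω = LinearMap.id) :
    KerPreserving ϑ := by
  intro x v hx hv
  refine (hϑ.posSemidef_apply hx).mulVec_eq_zero_of_add (hω.posSemidef_apply hx) ?_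
  rwa [← Submodule.coe_add, ← LinearMap.add_apply, hsum, LinearMap.id_apply]

lemma KerPreserving.image_coords_of_ne {n : ℕ} {ϑ : YSys n →ₗ[ℂ] YSys n} (hϑ : KerPreserving ϑ)
    {e : ℂ × (Fin n → ℂ)} {h : Fin n → ℂ × (Fin n → ℂ)}
    (hE : toYSys n e = ϑ (toYSys n (1, 0)))
    (hH : ∀ i, toYSys n (h i) = ϑ (toYSys n (0, Pi.single i 1))) {j k : Fin n} (hjk : j ≠ k) :
    (h k).1 = 0 ∧ (h k).2 j = 0 ∧ e.2 j = (h j).1 ∧ (h j).2 j = e.1 := by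
  have key (σ τ : ℂ) (hσ : σ = 1 ∨ σ = -1) (hτ : τ = 1 ∨ τ = -1) :
      e.1 + τ * (h k).1 - σ * (h j).1 + σ * (e.2 j + τ * (h k).2 j - σ * (h j).2 j) = 0 := by
    have hσσ : σ * σ = 1 := by rcases hσ with rfl | rfl <;> norm_num
    have hp : ((1, Pi.single k τ - Pi.single j σ) : ℂ × (Fin n → ℂ)) =
        (1, 0) + τ • (0, Pi.single k 1) - σ • (0, Pi.single j 1) := by
      ext i <;> simp [Pi.single_apply]
    set x := toYSys n (1, Pi.single k τ - Pi.single j σ)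
    have hx := hϑ x _ (yMat_one_single_sub_single_posSemidef hjk hσ hτ)
      (yMat_one_single_sub_single_mulVec_yVec hjk hσσ τ)
    have himage : ϑ x = toYSys n (e + τ • h k - σ • h j) := by
      simp only [x, hp, map_add, map_sub, map_smul, hE, hH]
    rw [himage, coe_toYSys, yMat_mulVec_yVec _ _ _ hσσ, smul_eq_zero] at hx
    simpa using hx.resolve_right (yVec_ne_zero j σ)
  have e₁ := key 1 1 (.inl rfl) (.inl rfl)
  have e₂ := key 1 (-1) (.inl rfl) (.inr rfl)
  have e₃ := key (-1) 1 (.inr rfl) (.inl rfl)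
  have e₄ := key (-1) (-1) (.inr rfl) (.inr rfl)
  refine ⟨?_, ?_, ?_, ?_⟩
  · linear_combination (e₁ - e₂ + e₃ - e₄) / 4
  · linear_combination (e₁ - e₂ - e₃ + e₄) / 4
  · linear_combination (e₁ + e₂ - e₃ - e₄) / 4
  · linear_combination -(e₁ + e₂ + e₃ + e₄) / 4

lemma KerPreserving.exists_eq_smul_id {n : ℕ} (hn : 2 ≤ n) {ϑ : YSys n →ₗ[ℂ] YSys n}
    (hϑ : KerPreserving ϑ) : ∃ a : ℂ, ϑ = a • LinearMap.id := by
  have : Nontrivial (Fin n) := Fin.nontrivial_iff_two_le.mpr hn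
  obtain ⟨⟨a, c⟩, hE⟩ := toYSys_surjective n (ϑ (toYSys n (1, 0)))
  choose h hH using fun k => toYSys_surjective n (ϑ (toYSys n (0, Pi.single k 1)))
  have coords {j k : Fin n} (hjk : j ≠ k) := hϑ.image_coords_of_ne hE hH hjk
  have hb (k : Fin n) : (h k).1 = 0 := (coords (exists_ne k).choose_spec).1
  have hc : c = 0 := funext fun j => (coords (exists_ne j).choose_spec.symm).2.2.1.trans (hb j)
  have hd (k : Fin n) : (h k).2 = a • Pi.single k 1 := by
    funext j
    by_cases hjk : j = k
    · subst hjk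
      simpa using (coords (exists_ne j).choose_spec.symm).2.2.2
    · simpa [hjk] using (coords hjk).2.1
  refine ⟨a, (LinearMap.cancel_right (toYSys_surjective n)).mp ?_⟩
  refine LinearMap.prod_ext (LinearMap.ext_ring ?_) (LinearMap.pi_ext' fun k => LinearMap.ext_ring ?_)
  · simp only [LinearMap.comp_apply, LinearMap.inl_apply, LinearMap.smul_apply, LinearMap.id_apply]
    rw [← hE, hc, ← map_smul]
    simp
  · simp only [LinearMap.comp_apply, LinearMap.coe_single, LinearMap.inr_apply,
      LinearMap.smul_apply, LinearMap.id_apply]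
    rw [← hH, ← map_smul]
    exact congrArg _ (Prod.ext (by simp [hb]) (by simp [hd]))

lemma nonneg_of_isCP_smul_id {n : ℕ} [NeZero n] {a : ℂ}
    (h : IsCP (YSys n) (YSys n) (a • LinearMap.id)) : 0 ≤ a := by
  have hE := h.posSemidef_apply (x := toYSys n (1, 0))
    (by rw [coe_toYSys]; exact yMat_posSemidef_iff.mpr (by simp))
  rw [LinearMap.smul_apply, LinearMap.id_apply, ← map_smul, coe_toYSys] at hE
  simpa using (yMat_posSemidef_iff.mp hE 0).1

/-- The identity map on `Yₙ` is pure in the cone `CP(Yₙ, Yₙ)`, for every `n ≥ 2`. -/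
theorem identity_map_on_Yn_is_pure (n : ℕ) (hn : 2 ≤ n)
    (ϑ ω : YSys n →ₗ[ℂ] YSys n)
    (hϑ : IsCP (YSys n) (YSys n) ϑ) (hω : IsCP (YSys n) (YSys n) ω)
    (hsum : ϑ + ω = LinearMap.id) :
    ∃ s : ℝ, 0 ≤ s ∧ s ≤ 1 ∧
      ϑ = (s : ℂ) • (LinearMap.id : YSys n →ₗ[ℂ] YSys n) ∧
      ω = ((1 - s : ℝ) : ℂ) • (LinearMap.id : YSys n →ₗ[ℂ] YSys n) := by
  obtain ⟨a, rfl⟩ := (kerPreserving_of_isCP_of_add_eq_id hϑ hω hsum).exists_eq_smul_id hn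
  have hω' : ω = (1 - a) • LinearMap.id := by
    ext x : 1
    have h := LinearMap.congr_fun hsum x
    simp only [LinearMap.add_apply, LinearMap.smul_apply, LinearMap.id_apply] at h ⊢
    rw [sub_smul, one_smul]
    exact eq_sub_of_add_eq' h
  have : NeZero n := ⟨by omega⟩
  have hs₀ := nonneg_of_isCP_smul_id hϑ
  obtain ⟨s, rfl⟩ : ∃ s : ℝ, (s : ℂ) = a :=
    ⟨a.re, (Complex.eq_re_of_ofReal_le (by rwa [Complex.ofReal_zero])).symm⟩
  have hs₁ := nonneg_of_isCP_smul_id (hω' ▸ hω)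
  rw [Complex.zero_le_real] at hs₀
  rw [← Complex.ofReal_one, ← Complex.ofReal_sub, Complex.zero_le_real] at hs₁
  exact ⟨s, hs₀, by linarith, rfl, by rw [hω']; push_cast; rfl⟩
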